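/- Let T be an invertible ergodic measure-preserving transformation of a probability space (Ω, B, P), G a countable group, f: Ω → G measurable, and F the associated cocycle. If F is transient (i.e., almost surely F(n,ω) = id_G for only finitely many n ≥ 1), then P({ω : F(n,ω) ≠ id_G for all n ≥ 1}) > 0, and consequently there exists c > 0 such that |R_ω(n)|/n → c almost surely. -/

import Mathlib

open MeasureTheory Filter Finset Topology

/-!
Let `A` be the set of `ω` from which the cocycle never returns to the identity, and `A_M` the set
from which it does not return within `M` steps. If `T^[k] ω ∈ A`, the value `F(k, ω)` is never
taken again, so such times give distinct points of the range. Conversely every point of the range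
up to time `n` has a last visit `k`, and `T^[k] ω ∈ A_M` unless `k > n - M`. The ergodic theorem
for the indicators of `A` and `A_M` therefore squeezes `|R_ω(n)| / n` between `P(A)` and
`P(A_M) + M / n`, while `P(A_M) ↓ P(A)`. If `P(A)` were `0`, almost every orbit would avoid `A`,
so every return to the identity would be followed by another one, contradicting transience.

The pointwise ergodic theorem is only needed for `[0, 1]`-valued functions: the `limsup` of the
Birkhoff averages is invariant, hence almost surely constant, and a stopping-time argument bounds
that constant by the integral.
-/

theorem tendsto_of_tendsto_of_le_of_forall_le_tendsto {ι κ α : Type*} [TopologicalSpace α]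
    [LinearOrder α] [OrderTopology α] {l : Filter ι} {m : Filter κ} [m.NeBot]
    {u lower : ι → α} {upper : κ → ι → α} {a : α} {b : κ → α}
    (hlower : Tendsto lower l (𝓝 a)) (hlu : ∀ i, lower i ≤ u i)
    (hupper : ∀ j, Tendsto (upper j) l (𝓝 (b j))) (hub : ∀ j i, u i ≤ upper j i)
    (hb : Tendsto b m (𝓝 a)) : Tendsto u l (𝓝 a) := by
  refine tendsto_order.2 ⟨fun a' ha' => ?_, fun a' ha' => ?_⟩
  · exact ((tendsto_order.1 hlower).1 a' ha').mono fun i hi => hi.trans_le (hlu i)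
  · obtain ⟨j, hj⟩ := ((tendsto_order.1 hb).2 a' ha').exists
    exact ((tendsto_order.1 (hupper j)).2 a' hj).mono fun i hi => (hub j i).trans_lt hi

theorem limsup_add_eq_of_tendsto_zero {ι : Type*} {l : Filter ι} [l.NeBot] {v w : ι → ℝ}
    (hv₁ : IsBoundedUnder (· ≤ ·) l v) (hv₂ : IsBoundedUnder (· ≥ ·) l v)
    (hw : Tendsto w l (𝓝 0)) : limsup (v + w) l = limsup v l := by
  apply le_antisymm
  · calc limsup (v + w) l ≤ limsup v l + limsup w l :=
          limsup_add_le hv₂ hv₁ hw.isBoundedUnder_ge.isCoboundedUnder_le hw.isBoundedUnder_le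
      _ = limsup v l := by rw [hw.limsup_eq, add_zero]
  · calc limsup v l = limsup v l + liminf w l := by rw [hw.liminf_eq, add_zero]
      _ ≤ limsup (v + w) l :=
          le_limsup_add hv₁ hv₂.isCoboundedUnder_le hw.isBoundedUnder_le hw.isBoundedUnder_ge

theorem MeasureTheory.tendsto_measureReal_iInter_atTop {α : Type*} [MeasurableSpace α]
    {μ : Measure α} [IsFiniteMeasure μ] {s : ℕ → Set α} (hs : ∀ n, NullMeasurableSet (s n) μ)
    (hanti : Antitone s) : Tendsto (fun n => μ.real (s n)) atTop (𝓝 (μ.real (⋂ n, s n))) :=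
  (ENNReal.tendsto_toReal (measure_ne_top μ _)).comp
    (tendsto_measure_iInter_atTop hs hanti ⟨0, measure_ne_top μ _⟩)

section Birkhoff

variable {α : Type*} {T : α → α} {g : α → ℝ}

theorem birkhoffSum_nonneg (hg : ∀ x, 0 ≤ g x) (n : ℕ) (x : α) : 0 ≤ birkhoffSum T g n x :=
  sum_nonneg fun _ _ => hg _

theorem birkhoffAverage_mem_Icc (hg : ∀ x, g x ∈ Set.Icc 0 1) (n : ℕ) (x : α) :
    birkhoffAverage ℝ T g n x ∈ Set.Icc 0 1 := by
  rcases Nat.eq_zero_or_pos n with rfl | hn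
  · simp
  have hsum : birkhoffSum T g n x ≤ n := by
    simpa [birkhoffSum] using sum_le_sum fun k (_ : k ∈ range n) => (hg (T^[k] x)).2
  rw [birkhoffAverage, smul_eq_mul]
  exact ⟨by have := birkhoffSum_nonneg (T := T) (fun x => (hg x).1) n x; positivity,
    inv_mul_le_one_of_le₀ hsum (Nat.cast_nonneg n)⟩

theorem birkhoffAverage_one_sub {n : ℕ} (hn : n ≠ 0) (x : α) :
    birkhoffAverage ℝ T (fun x => 1 - g x) n x = 1 - birkhoffAverage ℝ T g n x := by
  simp [birkhoffAverage, birkhoffSum, sum_sub_distrib, mul_sub, hn]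

theorem birkhoffSum_indicator_one {M : Type*} [AddCommMonoidWithOne M] (s : Set α)
    [DecidablePred (· ∈ s)] (n : ℕ) (x : α) :
    birkhoffSum T (s.indicator (1 : α → M)) n x = #{k ∈ range n | T^[k] x ∈ s} := by
  simp [birkhoffSum, Set.indicator_apply, sum_boole]

-- Cut the orbit into consecutive stretches of length at most `M`, each of average at least `a`.
theorem birkhoffSum_ge_of_forall_exists {a : ℝ} {M : ℕ} (hg : ∀ x, 0 ≤ g x) (ha : 0 ≤ a)
    (hstop : ∀ x, ∃ n, 1 ≤ n ∧ n ≤ M ∧ n * a ≤ birkhoffSum T g n x) (N : ℕ) (x : α) :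
    (N - M : ℝ) * a ≤ birkhoffSum T g N x := by
  induction N using Nat.strong_induction_on generalizing x with
  | _ N ih =>
  obtain ⟨n, hn1, hnM, hn⟩ := hstop x
  rcases lt_or_ge N n with hN | hN
  · have : (N : ℝ) ≤ M := by exact_mod_cast (hN.trans_le hnM).le
    exact (mul_nonpos_of_nonpos_of_nonneg (by linarith) ha).trans (birkhoffSum_nonneg hg N x)
  · obtain ⟨k, rfl⟩ := Nat.exists_eq_add_of_le hN
    have hk := ih k (by omega) (T^[n] x)
    rw [birkhoffSum_add]
    push_cast
    linear_combination hn + hk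

theorem limsup_birkhoffAverage_apply (hg : ∀ x, g x ∈ Set.Icc 0 1) (x : α) :
    limsup (birkhoffAverage ℝ T g · (T x)) atTop = limsup (birkhoffAverage ℝ T g · x) atTop := by
  have hbdd : Bornology.IsBounded (Set.range g) :=
    Metric.isBounded_Icc (0 : ℝ) 1 |>.subset (Set.range_subset_iff.2 hg)
  have hsplit : (birkhoffAverage ℝ T g · (T x)) = (birkhoffAverage ℝ T g · x) +
      fun n => birkhoffAverage ℝ T g n (T x) - birkhoffAverage ℝ T g n x := by
    ext n; simp
  rw [hsplit]
  exact limsup_add_eq_of_tendsto_zero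
    (isBoundedUnder_of ⟨1, fun n => (birkhoffAverage_mem_Icc (T := T) hg n x).2⟩)
    (isBoundedUnder_of ⟨0, fun n => (birkhoffAverage_mem_Icc (T := T) hg n x).1⟩)
    (tendsto_birkhoffAverage_apply_sub_birkhoffAverage' ℝ hbdd T x)

variable [MeasurableSpace α] {μ : Measure α}

theorem measurable_birkhoffSum (hT : Measurable T) (hg : Measurable g) (n : ℕ) :
    Measurable (birkhoffSum T g n) :=
  Finset.measurable_sum _ fun k _ => hg.comp (hT.iterate k)

theorem MeasureTheory.MeasurePreserving.integrable_birkhoffSum (hT : MeasurePreserving T μ μ)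
    (hg : Integrable g μ) (n : ℕ) : Integrable (birkhoffSum T g n) μ :=
  integrable_finsetSum _ fun k _ => (hT.iterate k).integrable_comp_of_integrable hg

theorem MeasureTheory.MeasurePreserving.integral_birkhoffSum (hT : MeasurePreserving T μ μ)
    (hg : Integrable g μ) (n : ℕ) : ∫ x, birkhoffSum T g n x ∂μ = n * ∫ x, g x ∂μ := by
  have hk : ∀ k, ∫ x, g (T^[k] x) ∂μ = ∫ x, g x ∂μ := fun k => by
    rw [← integral_map (hT.iterate k).aemeasurable (by rw [(hT.iterate k).map_eq]; exact hg.1),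
      (hT.iterate k).map_eq]
  simp only [birkhoffSum]
  rw [integral_finsetSum (f := fun k x => g (T^[k] x)) _
    fun k _ => (hT.iterate k).integrable_comp_of_integrable hg]
  simp [hk]

theorem le_integral_of_forall_exists_birkhoffSum_ge [IsProbabilityMeasure μ]
    (hT : MeasurePreserving T μ μ) (hg : Integrable g μ) (hg0 : ∀ x, 0 ≤ g x) {a : ℝ}
    (ha : 0 ≤ a) {M : ℕ} (hstop : ∀ x, ∃ n, 1 ≤ n ∧ n ≤ M ∧ n * a ≤ birkhoffSum T g n x) :
    a ≤ ∫ x, g x ∂μ := by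
  have hN : ∀ N : ℕ, (N - M : ℝ) * a ≤ N * ∫ x, g x ∂μ := fun N => by
    rw [← hT.integral_birkhoffSum hg N]
    simpa using integral_mono (integrable_const _) (hT.integrable_birkhoffSum hg N)
      (birkhoffSum_ge_of_forall_exists hg0 ha hstop N)
  have hlim : Tendsto (fun N : ℕ => ∫ x, g x ∂μ + M * a / N) atTop (𝓝 (∫ x, g x ∂μ)) := by
    simpa using tendsto_const_nhds.add (tendsto_const_div_atTop_nhds_zero_nat (M * a))
  refine ge_of_tendsto hlim ((eventually_gt_atTop 0).mono fun N hN0 => ?_)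
  have hN0 : (0 : ℝ) < N := by exact_mod_cast hN0
  rw [← sub_le_iff_le_add', le_div_iff₀ hN0]
  linarith [hN N]

theorem le_integral_of_ae_exists_birkhoffSum_ge [IsProbabilityMeasure μ]
    (hT : MeasurePreserving T μ μ) (hgm : Measurable g) (hg : Integrable g μ)
    (hg0 : ∀ x, 0 ≤ g x) {a : ℝ}
    (hae : ∀ᵐ x ∂μ, ∃ n, 1 ≤ n ∧ n * a ≤ birkhoffSum T g n x) : a ≤ ∫ x, g x ∂μ := by
  rcases le_or_gt a 0 with ha | ha
  · exact ha.trans (integral_nonneg hg0)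
  -- `B M` is where the stopping time exceeds `M`; adding `a` on `B M` makes it at most `M + 1`.
  set B : ℕ → Set α := fun M => {x | ∀ n, 1 ≤ n → n ≤ M → birkhoffSum T g n x < n * a}
  have hBm : ∀ M, MeasurableSet (B M) := fun M => by
    simp only [B, Set.ofPred_forall]
    exact .iInter fun n => .iInter fun _ => .iInter fun _ =>
      measurableSet_lt (measurable_birkhoffSum hT.measurable hgm n) measurable_const
  have hB : Tendsto (fun M => μ.real (B M)) atTop (𝓝 0) := by
    have hnull : μ (⋂ M, B M) = 0 := measure_mono_null
      (fun x hx => by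
        rintro ⟨n, hn1, hn⟩
        exact (Set.mem_iInter.1 hx n n hn1 le_rfl).not_ge hn) (ae_iff.1 hae)
    simpa [Measure.real, hnull] using tendsto_measureReal_iInter_atTop (μ := μ)
      (fun M => (hBm M).nullMeasurableSet) fun M M' hMM' x hx n hn1 hnM => hx n hn1 (hnM.trans hMM')
  have hM : ∀ M, a ≤ ∫ x, g x ∂μ + a * μ.real (B M) := fun M => by
    have hind : Integrable ((B M).indicator fun _ => a) μ := (integrable_const a).indicator (hBm M)
    have hind0 : ∀ x, 0 ≤ (B M).indicator (fun _ => a) x :=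
      Set.indicator_nonneg fun _ _ => ha.le
    have hstop : ∀ x, ∃ n, 1 ≤ n ∧ n ≤ M + 1 ∧
        n * a ≤ birkhoffSum T (g + (B M).indicator fun _ => a) n x := fun x => by
      by_cases hx : x ∈ B M
      · refine ⟨1, le_rfl, by omega, ?_⟩
        simp [birkhoffSum_one, Set.indicator_of_mem hx, hg0 x]
      · simp only [B, Set.mem_ofPred_eq, not_forall, not_lt] at hx
        obtain ⟨n, hn1, hnM, hn⟩ := hx
        refine ⟨n, hn1, by omega, hn.trans ?_⟩
        rw [birkhoffSum_add']
        exact le_add_of_nonneg_right (birkhoffSum_nonneg hind0 n x)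
    have := le_integral_of_forall_exists_birkhoffSum_ge hT (hg.add hind)
      (fun x => add_nonneg (hg0 x) (hind0 x)) ha.le hstop
    rwa [integral_add' hg hind, integral_indicator_const _ (hBm M), smul_eq_mul, mul_comm] at this
  exact ge_of_tendsto' (by simpa using tendsto_const_nhds.add (hB.const_mul a)) hM

theorem Ergodic.ae_limsup_birkhoffAverage_le [IsProbabilityMeasure μ] (hT : Ergodic T μ)
    (hgm : Measurable g) (hg : ∀ x, g x ∈ Set.Icc 0 1) :
    ∀ᵐ x ∂μ, limsup (birkhoffAverage ℝ T g · x) atTop ≤ ∫ x, g x ∂μ := by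
  have hLm : Measurable fun x => limsup (birkhoffAverage ℝ T g · x) atTop :=
    .limsup fun n => (measurable_birkhoffSum hT.measurable hgm n).const_smul (n⁻¹ : ℝ)
  obtain ⟨c, hc⟩ := hT.ae_eq_const_of_ae_eq_comp₀ hLm.nullMeasurable
    (Eventually.of_forall fun x => limsup_birkhoffAverage_apply hg x)
  suffices c ≤ ∫ x, g x ∂μ from hc.mono fun x hx => hx.trans_le this
  refine le_of_forall_lt_imp_le_of_dense fun a ha => ?_
  refine le_integral_of_ae_exists_birkhoffSum_ge hT.toMeasurePreserving hgm
    (.of_mem_Icc 0 1 hgm.aemeasurable (ae_of_all _ hg)) (fun x => (hg x).1)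
    (hc.mono fun x hx => ?_)
  have hfreq := frequently_lt_of_lt_limsup (isBoundedUnder_of
    ⟨0, fun n => (birkhoffAverage_mem_Icc (T := T) hg n x).1⟩).isCoboundedUnder_le
    (ha.trans_eq hx.symm)
  obtain ⟨n, hlt, hn⟩ := (hfreq.and_eventually (eventually_ge_atTop 1)).exists
  refine ⟨n, hn, ?_⟩
  have hn0 : (0 : ℝ) < n := by exact_mod_cast hn
  rw [birkhoffAverage, smul_eq_mul, ← div_eq_inv_mul, lt_div_iff₀ hn0] at hlt
  linarith

theorem Ergodic.ae_tendsto_birkhoffAverage [IsProbabilityMeasure μ] (hT : Ergodic T μ)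
    (hgm : Measurable g) (hg : ∀ x, g x ∈ Set.Icc 0 1) :
    ∀ᵐ x ∂μ, Tendsto (birkhoffAverage ℝ T g · x) atTop (𝓝 (∫ x, g x ∂μ)) := by
  have hg' : ∀ x, 1 - g x ∈ Set.Icc 0 1 := fun x => by
    simp only [Set.mem_Icc, sub_nonneg, sub_le_self_iff]
    exact ⟨(hg x).2, (hg x).1⟩
  filter_upwards [hT.ae_limsup_birkhoffAverage_le hgm hg,
    hT.ae_limsup_birkhoffAverage_le (g := fun x => 1 - g x) (measurable_const.sub hgm) hg']
    with x hup hlow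
  rw [integral_sub (integrable_const 1) (.of_mem_Icc 0 1 hgm.aemeasurable (ae_of_all _ hg)),
    integral_const, probReal_univ, one_smul] at hlow
  refine tendsto_order.2 ⟨fun a ha => ?_, fun b hb => ?_⟩
  · have := eventually_lt_of_limsup_lt (hlow.trans_lt (sub_lt_sub_left ha 1))
      (isBoundedUnder_of ⟨1, fun n => (birkhoffAverage_mem_Icc (T := T) hg' n x).2⟩)
    filter_upwards [this, eventually_ne_atTop 0] with n hn hn0
    rw [birkhoffAverage_one_sub hn0] at hn
    linarith
  · exact eventually_lt_of_limsup_lt (hup.trans_lt hb)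
      (isBoundedUnder_of ⟨1, fun n => (birkhoffAverage_mem_Icc (T := T) hg n x).2⟩)

theorem Ergodic.ae_tendsto_card_visits_div [IsProbabilityMeasure μ] (hT : Ergodic T μ)
    {s : Set α} (hs : MeasurableSet s) [DecidablePred (· ∈ s)] :
    ∀ᵐ x ∂μ, Tendsto (fun n => (#{k ∈ range n | T^[k] x ∈ s} : ℝ) / n) atTop (𝓝 (μ.real s)) := by
  filter_upwards [hT.ae_tendsto_birkhoffAverage (measurable_one.indicator hs)
    fun x => ⟨Set.indicator_nonneg (fun _ _ => zero_le_one) x,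
      Set.indicator_le_self' (fun _ _ => zero_le_one) x⟩] with x hx
  rw [integral_indicator_one hs] at hx
  simp only [birkhoffAverage, birkhoffSum_indicator_one, smul_eq_mul] at hx
  simpa [div_eq_inv_mul] using hx

end Birkhoff

section Cocycle

variable {Ω G : Type*} {T : Ω → Ω} {f : Ω → G}

def cocycle [Monoid G] (T : Ω → Ω) (f : Ω → G) (n : ℕ) (ω : Ω) : G :=
  ((List.range n).map fun i => f (T^[i] ω)).prod

def noReturnSet [Monoid G] (T : Ω → Ω) (f : Ω → G) : Set Ω :=
  {ω | ∀ n, 1 ≤ n → cocycle T f n ω ≠ 1}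

def noReturnUpTo [Monoid G] (T : Ω → Ω) (f : Ω → G) (M : ℕ) : Set Ω :=
  {ω | ∀ n, 1 ≤ n → n ≤ M → cocycle T f n ω ≠ 1}

section Monoid

variable [Monoid G]

theorem cocycle_zero (ω : Ω) : cocycle T f 0 ω = 1 := by
  simp [cocycle]

theorem cocycle_add (m n : ℕ) (ω : Ω) :
    cocycle T f (m + n) ω = cocycle T f m ω * cocycle T f n (T^[m] ω) := by
  simp [cocycle, List.range_add, Function.comp_def, ← Function.iterate_add_apply, add_comm]

theorem cocycle_succ (n : ℕ) (ω : Ω) : cocycle T f (n + 1) ω = f ω * cocycle T f n (T ω) := by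
  rw [add_comm, cocycle_add]
  simp [cocycle]

theorem measurable_cocycle [MeasurableSpace Ω] [MeasurableSpace G] [MeasurableMul₂ G]
    (hT : Measurable T) (hf : Measurable f) (n : ℕ) : Measurable (cocycle T f n) := by
  have h := List.measurable_fun_prod ((List.range n).map fun i ω => f (T^[i] ω))
    (by simpa using fun i _ => by exact hf.comp (hT.iterate i))
  simp only [List.map_map, Function.comp_def] at h
  exact h

theorem iInter_noReturnUpTo : ⋂ M, noReturnUpTo T f M = noReturnSet T f := by
  ext ω
  simp only [Set.mem_iInter, noReturnUpTo, noReturnSet, Set.mem_ofPred_eq]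
  exact ⟨fun h n hn => h n n hn le_rfl, fun h _ n hn _ => h n hn⟩

theorem antitone_noReturnUpTo : Antitone (noReturnUpTo T f) :=
  fun _ _ hMM' _ hω n hn1 hnM => hω n hn1 (hnM.trans hMM')

section Measurable

variable [MeasurableSpace Ω] [MeasurableSpace G] [MeasurableMul₂ G] [MeasurableSingletonClass G]

theorem measurableSet_noReturnUpTo (hT : Measurable T) (hf : Measurable f) (M : ℕ) :
    MeasurableSet (noReturnUpTo T f M) := by
  simp only [noReturnUpTo, Set.ofPred_forall]
  exact .iInter fun n => .iInter fun _ => .iInter fun _ =>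
    (measurable_cocycle hT hf n (measurableSet_singleton 1)).compl

theorem measurableSet_noReturnSet (hT : Measurable T) (hf : Measurable f) :
    MeasurableSet (noReturnSet T f) :=
  iInter_noReturnUpTo (T := T) (f := f) ▸ .iInter (measurableSet_noReturnUpTo hT hf)

end Measurable

/-- Every value taken before time `n` is taken a last time `k`; unless `k` is one of the final
`M` times, the orbit cannot return from `T^[k] ω` within `M` steps. -/
theorem image_cocycle_range_subset [DecidableEq G] {M : ℕ}
    [DecidablePred (· ∈ noReturnUpTo T f M)] (n : ℕ) (ω : Ω) :
    (range n).image (cocycle T f · ω) ⊆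
      ({k ∈ range n | T^[k] ω ∈ noReturnUpTo T f M} ∪ Ico (n - M) n).image
        (cocycle T f · ω) := by
  intro y hy
  obtain ⟨j, hj, rfl⟩ := mem_image.1 hy
  set S := {i ∈ range n | cocycle T f i ω = cocycle T f j ω}
  have hjS : j ∈ S := mem_filter.2 ⟨hj, rfl⟩
  set k := S.max' ⟨j, hjS⟩
  obtain ⟨hkn, hk⟩ := mem_filter.1 (S.max'_mem ⟨j, hjS⟩)
  refine mem_image.2 ⟨k, ?_, hk⟩
  rw [mem_union, mem_filter, mem_Ico, mem_range]
  by_cases hkM : n - M ≤ k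
  · exact .inr ⟨hkM, mem_range.1 hkn⟩
  refine .inl ⟨mem_range.1 hkn, fun m hm1 hmM hm => ?_⟩
  have hkm : k + m ∈ S :=
    mem_filter.2 ⟨mem_range.2 (by omega), by rw [cocycle_add, hm, mul_one, hk]⟩
  have := S.le_max' _ hkm
  omega

theorem card_image_cocycle_range_le [DecidableEq G] {M : ℕ}
    [DecidablePred (· ∈ noReturnUpTo T f M)] (n : ℕ) (ω : Ω) :
    #((range n).image (cocycle T f · ω)) ≤ #{k ∈ range n | T^[k] ω ∈ noReturnUpTo T f M} + M :=
  calc #((range n).image (cocycle T f · ω))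
      _ ≤ #({k ∈ range n | T^[k] ω ∈ noReturnUpTo T f M} ∪ Ico (n - M) n) :=
        (card_le_card (image_cocycle_range_subset n ω)).trans card_image_le
      _ ≤ #{k ∈ range n | T^[k] ω ∈ noReturnUpTo T f M} + #(Ico (n - M) n) := card_union_le _ _
      _ ≤ _ := by rw [Nat.card_Ico]; omega

theorem infinite_returns_of_forall_iterate_notMem {ω : Ω}
    (h : ∀ k, T^[k] ω ∉ noReturnSet T f) : {n | 1 ≤ n ∧ cocycle T f n ω = 1}.Infinite := by
  have hnext : ∀ k, cocycle T f k ω = 1 → ∃ m, k < m ∧ cocycle T f m ω = 1 := fun k hk => by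
    obtain ⟨m, hm1, hm⟩ : ∃ m, 1 ≤ m ∧ cocycle T f m (T^[k] ω) = 1 := by
      simpa [noReturnSet] using h k
    exact ⟨k + m, by omega, by rw [cocycle_add, hk, hm, one_mul]⟩
  intro hfin
  obtain ⟨k, hk⟩ := (hfin.insert 0).exists_maximal (Set.insert_nonempty _ _)
  have hk1 : cocycle T f k ω = 1 := by
    rcases hk.prop with rfl | ⟨_, hk1⟩
    exacts [cocycle_zero ω, hk1]
  obtain ⟨m, hkm, hm⟩ := hnext k hk1
  exact hkm.not_ge (hk.2 (Or.inr ⟨by omega, hm⟩) hkm.le)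

/-- If almost every orbit avoided `noReturnSet`, every return would be followed by another one. -/
theorem measure_noReturnSet_pos [MeasurableSpace Ω] {μ : Measure Ω} [NeZero μ]
    (hT : Measure.QuasiMeasurePreserving T μ μ)
    (htrans : ∀ᵐ ω ∂μ, {n | 1 ≤ n ∧ cocycle T f n ω = 1}.Finite) :
    0 < μ (noReturnSet T f) := by
  refine pos_iff_ne_zero.2 fun h0 => ?_
  have hout : ∀ᵐ ω ∂μ, ∀ k, T^[k] ω ∉ noReturnSet T f :=
    ae_all_iff.2 fun k => (hT.iterate k).ae (measure_eq_zero_iff_ae_notMem.1 h0)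
  obtain ⟨ω, hfin, hω⟩ := (htrans.and hout).exists
  exact infinite_returns_of_forall_iterate_notMem hω hfin

end Monoid

section LeftCancelMonoid

variable [LeftCancelMonoid G]

theorem injOn_cocycle (ω : Ω) :
    Set.InjOn (cocycle T f · ω) {k | T^[k] ω ∈ noReturnSet T f} := by
  suffices ∀ a b, T^[a] ω ∈ noReturnSet T f → a < b → cocycle T f a ω ≠ cocycle T f b ω by
    intro a ha b hb hab
    by_contra hne
    rcases lt_or_gt_of_ne hne with h | h
    exacts [this a b ha h hab, this b a hb h hab.symm]
  intro a b ha hab heq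
  obtain ⟨m, rfl⟩ := Nat.exists_eq_add_of_lt hab
  rw [add_assoc, cocycle_add, eq_comm, mul_eq_left] at heq
  exact ha (m + 1) (by omega) heq

theorem card_filter_noReturnSet_le [DecidableEq G] [DecidablePred (· ∈ noReturnSet T f)]
    (n : ℕ) (ω : Ω) :
    #{k ∈ range n | T^[k] ω ∈ noReturnSet T f} ≤ #((range n).image (cocycle T f · ω)) :=
  card_le_card_of_injOn _ (fun _ hk => mem_image_of_mem _ (mem_filter.1 hk).1)
    ((injOn_cocycle ω).mono fun _ hk => (mem_filter.1 hk).2)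

theorem card_image_cocycle_Icc [DecidableEq G] (n : ℕ) (ω : Ω) :
    #((Icc 1 n).image (cocycle T f · ω)) = #((range n).image (cocycle T f · (T ω))) := by
  have hshift : (Icc 1 n).image (cocycle T f · ω) =
      ((range n).image (cocycle T f · (T ω))).image (f ω * ·) := by
    ext y
    simp only [image_image, mem_image, mem_Icc, mem_range, Function.comp_def]
    constructor
    · rintro ⟨k, ⟨hk1, hkn⟩, rfl⟩
      obtain ⟨j, rfl⟩ := Nat.exists_eq_add_of_le' hk1
      exact ⟨j, by omega, (cocycle_succ j ω).symm⟩
    · rintro ⟨j, hj, rfl⟩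
      exact ⟨j + 1, ⟨by omega, by omega⟩, cocycle_succ j ω⟩
  rw [hshift, card_image_of_injective _ (mul_right_injective (f ω))]

/-- The Kesten–Spitzer–Whitman range theorem. -/
theorem Ergodic.ae_tendsto_card_image_cocycle_div [MeasurableSpace Ω] [MeasurableSpace G]
    [MeasurableMul₂ G] [MeasurableSingletonClass G] [DecidableEq G] {μ : Measure Ω}
    [IsProbabilityMeasure μ] (hT : Ergodic T μ) (hf : Measurable f) :
    ∀ᵐ ω ∂μ, Tendsto (fun n => (#((range n).image (cocycle T f · ω)) : ℝ) / n) atTop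
      (𝓝 (μ.real (noReturnSet T f))) := by
  classical
  have hAM := measurableSet_noReturnUpTo hT.measurable hf
  filter_upwards [hT.ae_tendsto_card_visits_div (measurableSet_noReturnSet hT.measurable hf),
    ae_all_iff.2 fun M => hT.ae_tendsto_card_visits_div (hAM M)] with ω hlow hup
  refine tendsto_of_tendsto_of_le_of_forall_le_tendsto (m := atTop) hlow (fun n => ?_)
    (fun M => (hup M).add (tendsto_const_div_atTop_nhds_zero_nat (M : ℝ))) (fun M n => ?_) ?_
  · gcongr
    exact_mod_cast card_filter_noReturnSet_le n ω
  · rw [← add_div]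
    gcongr
    exact_mod_cast card_image_cocycle_range_le n ω
  · simpa [iInter_noReturnUpTo] using tendsto_measureReal_iInter_atTop
      (fun M => (hAM M).nullMeasurableSet) antitone_noReturnUpTo

end LeftCancelMonoid

end Cocycle

theorem transient_cocycle_range_linear_general
    {Ω : Type*} [MeasurableSpace Ω] (μ : Measure Ω) [IsProbabilityMeasure μ]
    {G : Type*} [Group G] [Countable G] [DecidableEq G]
    [MeasurableSpace G] [MeasurableSingletonClass G]
    (T : Ω → Ω) (hT : Ergodic T μ)
    (f : Ω → G) (hf : Measurable f)
    (F : ℕ → Ω → G)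
    (hF : ∀ n ω, F n ω = ((List.range n).map (fun i => f (T^[i] ω))).prod)
    (R : Ω → ℕ → Finset G)
    (hR : ∀ ω n, R ω n = (Finset.Icc 1 n).image (fun k => F k ω))
    (htrans : ∀ᵐ ω ∂μ, {n : ℕ | 1 ≤ n ∧ F n ω = 1}.Finite) :
    0 < μ {ω' | ∀ n : ℕ, 1 ≤ n → F n ω' ≠ 1} ∧
      ∃ c : ℝ, 0 < c ∧
        ∀ᵐ ω ∂μ, Tendsto (fun n => ((R ω n).card : ℝ) / n) atTop (nhds c) := by
  obtain rfl : F = cocycle T f := funext fun n => funext (hF n)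
  obtain rfl : R = fun ω n => (Icc 1 n).image (cocycle T f · ω) := funext fun ω => funext (hR ω)
  have hpos : 0 < μ (noReturnSet T f) :=
    measure_noReturnSet_pos hT.quasiMeasurePreserving htrans
  refine ⟨hpos, μ.real (noReturnSet T f), ENNReal.toReal_pos hpos.ne' (measure_ne_top μ _), ?_⟩
  filter_upwards [hT.quasiMeasurePreserving.ae (hT.ae_tendsto_card_image_cocycle_div hf)]
    with ω hω
  simpa only [card_image_cocycle_Icc] using hω

/-- For a transient cocycle, the no-return probability is positive and the
range grows linearly almost surely. -/
theorem transient_cocycle_range_linear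
    {Ω : Type*} [MeasurableSpace Ω] (μ : Measure Ω) [IsProbabilityMeasure μ]
    {G : Type*} [Group G] [Countable G] [DecidableEq G]
    [MeasurableSpace G] [MeasurableSingletonClass G]
    (T : Ω → Ω) (hTbij : Function.Bijective T) (hT : Ergodic T μ)
    (f : Ω → G) (hf : Measurable f)
    (F : ℕ → Ω → G)
    (hF : ∀ n ω, F n ω = ((List.range n).map (fun i => f (T^[i] ω))).prod)
    (R : Ω → ℕ → Finset G)
    (hR : ∀ ω n, R ω n = (Finset.Icc 1 n).image (fun k => F k ω))
    (htrans : ∀ᵐ ω ∂μ, {n : ℕ | 1 ≤ n ∧ F n ω = 1}.Finite) :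
    0 < μ {ω' | ∀ n : ℕ, 1 ≤ n → F n ω' ≠ 1} ∧
      ∃ c : ℝ, 0 < c ∧
        ∀ᵐ ω ∂μ, Tendsto (fun n => ((R ω n).card : ℝ) / n) atTop (nhds c) :=
  transient_cocycle_range_linear_general μ T hT f hf F hF R hR htrans
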